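/- There is a constant C depending only on the dimension d such that for every s ∈ R^d, the function log_{s,-s}(x) = log|x−s| − log|x+s| satisfies ||log_{s,-s}||*_BMO = ||log_{s,-s}||_BMO + |(log_{s,-s})_{Q_0}| ≤ C. -/

import Mathlib

open MeasureTheory Filter Set

noncomputable section

namespace TL

/-- Euclidean space `ℝ^d`. -/
abbrev Rd (d : ℕ) := EuclideanSpace ℝ (Fin d)

variable {d : ℕ}

/-- An axis-parallel cube in `ℝ^d` with center `c` and side length `len > 0`. -/
structure Cube (d : ℕ) where
  c : Rd d
  len : ℝ
  len_pos : 0 < len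

namespace Cube

/-- The set of points of the cube. -/
def set (Q : Cube d) : Set (Rd d) := {x | ∀ i, |x i - Q.c i| < Q.len / 2}

/-- The volume `ℓ^d` of a cube. -/
def vol (Q : Cube d) : ℝ := Q.len ^ d

/-- The cube dilated `α` times with respect to its center. -/
def dilate (Q : Cube d) (α : ℝ) (hα : 0 < α) : Cube d :=
  ⟨Q.c, α * Q.len, mul_pos hα Q.len_pos⟩

/-- The cube `2Q`. -/
def double (Q : Cube d) : Cube d := Q.dilate 2 two_pos

end Cube

/-- The average `f_Q` of `f` over the cube `Q`. -/
def avg (Q : Cube d) (f : Rd d → ℝ) : ℝ := (Q.vol)⁻¹ * ∫ x in Q.set, f x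

/-- The mean oscillation `‖f‖_Q = inf_b |Q|⁻¹ ∫_Q |f-b|`. -/
def osc (Q : Cube d) (f : Rd d → ℝ) : ℝ :=
  ⨅ b : ℝ, (Q.vol)⁻¹ * ∫ x in Q.set, |f x - b|

/-- The fixed unit cube `Q₀` centered at the origin. -/
def Q0 (d : ℕ) : Cube d := ⟨0, 1, one_pos⟩

/-- The `BMO` seminorm `sup_Q ‖f‖_Q`. -/
def bmoSeminorm (f : Rd d → ℝ) : ℝ := ⨆ Q : Cube d, osc Q f

/-- Membership in `BMO(ℝ^d)`: local integrability together with finiteness of the seminorm. -/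
def MemBMO (f : Rd d → ℝ) : Prop :=
  LocallyIntegrable f volume ∧ BddAbove (Set.range fun Q : Cube d => osc Q f)

/-- The `BMO` norm `‖f‖*_BMO = ‖f‖_BMO + |f_{Q₀}|`. -/
def bmoNorm (f : Rd d → ℝ) : ℝ := bmoSeminorm f + |avg (Q0 d) f|

/-- The side length `ℓ̃` of the smallest axis-parallel cube `Q̃` containing `Q` and `Q₀`. -/
def tildeLen (Q : Cube d) : ℝ :=
  ⨆ i : Fin d, (max (Q.c i + Q.len / 2) (1 / 2) - min (Q.c i - Q.len / 2) (-(1 / 2)))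

/-- The log-distance function `L(Q) = log max(ℓ̃/ℓ, ℓ̃) + 1`. -/
def Lfun (Q : Cube d) : ℝ := Real.log (max (tildeLen Q / Q.len) (tildeLen Q)) + 1

/-- The `LMO` seminorm `sup_Q L(Q)·‖f‖_Q`. -/
def lmoSeminorm (f : Rd d → ℝ) : ℝ := ⨆ Q : Cube d, Lfun Q * osc Q f

/-- Membership in `LMO(ℝ^d)`. -/
def MemLMO (f : Rd d → ℝ) : Prop :=
  LocallyIntegrable f volume ∧ BddAbove (Set.range fun Q : Cube d => Lfun Q * osc Q f)

/-- A Calderón–Zygmund kernel on `ℝ^d` with regularity exponent `δ ∈ (0,1]`. -/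
structure CZKernel (d : ℕ) where
  K : Rd d → Rd d → ℝ
  C : ℝ
  δ : ℝ
  δ_pos : 0 < δ
  δ_le_one : δ ≤ 1
  meas : Measurable (Function.uncurry K)
  size : ∀ x y : Rd d, x ≠ y → |K x y| ≤ C * ‖x - y‖ ^ (-(d : ℝ))
  regularity : ∀ x₁ x₂ y : Rd d, x₁ ≠ y → 2 * ‖x₁ - x₂‖ ≤ ‖x₁ - y‖ →
    |K x₁ y - K x₂ y| ≤ C * ‖x₁ - x₂‖ ^ δ / ‖x₁ - y‖ ^ ((d : ℝ) + δ)

/-- A Calderón–Zygmund operator: a bounded linear operator on `L²(ℝ^d)` associated to a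
Calderón–Zygmund kernel, i.e. represented by integration against the kernel a.e. outside
the support of compactly supported `L²` functions. -/
structure CZOperator (d : ℕ) extends CZKernel d where
  T : Lp ℝ 2 (volume : Measure (Rd d)) →L[ℝ] Lp ℝ 2 (volume : Measure (Rd d))
  repr : ∀ f : Lp ℝ 2 (volume : Measure (Rd d)),
    HasCompactSupport (f : Rd d → ℝ) →
    ∀ᵐ x : Rd d, x ∉ tsupport (f : Rd d → ℝ) → (T f : Rd d → ℝ) x = ∫ y, K x y * f y

open Classical in
/-- The local part `∫_{2Q} K(x,y) g(y) dy` of `T_Q g`, interpreted in the `L²` sense: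
`T` applied to `g·χ_{2Q}` (and junk value `0` if `g·χ_{2Q} ∉ L²`). -/
def TQloc (S : CZOperator d) (Q : Cube d) (g : Rd d → ℝ) : Rd d → ℝ :=
  fun x =>
    if h : MemLp (Q.double.set.indicator g) 2 (volume : Measure (Rd d)) then
      (S.T (MemLp.toLp _ h) : Rd d → ℝ) x
    else 0

/-- The tail part `∫_{ℝ^d∖2Q} (K(x,y)-K(c,y)) g(y) dy` of `T_Q g`. -/
def TQtail (S : CZOperator d) (Q : Cube d) (g : Rd d → ℝ) : Rd d → ℝ :=
  fun x => ∫ y in (Q.double.set)ᶜ, (S.K x y - S.K Q.c y) * g y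

/-- `T_Q g (x) = ∫_{2Q} K(x,y)g(y)dy + ∫_{ℝ^d∖2Q}(K(x,y)-K(c,y))g(y)dy` for `x ∈ Q`. -/
def TQ (S : CZOperator d) (Q : Cube d) (g : Rd d → ℝ) : Rd d → ℝ :=
  fun x => TQloc S Q g x + TQtail S Q g x

/-- `T_Q 1`, where `1` is the constant function `χ_{ℝ^d}`. -/
def Tone (S : CZOperator d) (Q : Cube d) : Rd d → ℝ := TQ S Q (fun _ => 1)

/-- For `f ∈ BMO`, `T_Q f = f_{2Q}·T_Q1 + T_Q(f - f_{2Q})`. -/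
def TQbmo (S : CZOperator d) (Q : Cube d) (f : Rd d → ℝ) : Rd d → ℝ :=
  fun x => avg Q.double f * Tone S Q x + TQ S Q (fun y => f y - avg Q.double f) x

/-- The seminorm `‖Tf‖_BMO = sup_Q ‖T_Q f‖_Q` for `f ∈ BMO`. -/
def TbmoSeminorm (S : CZOperator d) (f : Rd d → ℝ) : ℝ :=
  ⨆ Q : Cube d, osc Q (TQbmo S Q f)

/-- The function `log|x|`. -/
def logAbs : Rd d → ℝ := fun x => Real.log ‖x‖

/-- The function `log_{s,-s}(x) = log|x-s| - log|x+s|`. -/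
def logss (s : Rd d) : Rd d → ℝ := fun x => Real.log ‖x - s‖ - Real.log ‖x + s‖

/-!
`log_{s,-s}` is odd and `Q₀` is symmetric, so its average over `Q₀` vanishes, and it suffices to
bound the mean oscillation of `x ↦ log |x - p|` on a cube `Q = Q(c, ℓ)` uniformly in `p` and `Q`.
If `|c - p| ≥ √d ℓ`, then `|x - p|` stays within a factor `2` of `|c - p|` on `Q`. Otherwise
`|x - p| ≤ 2√d ℓ` on `Q`, and `|x - p| ≥ |x_i - p_i|` gives
`|log |x - p| - log ℓ| ≤ log (2√d) + log⁺ (ℓ / |x_i - p_i|)`; by Fubini the integral of the last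
term over `Q` is `ℓ^(d-1)` times a one-dimensional integral, at most `∫ log⁺ (ℓ / |t|) dt = 2ℓ`.
-/

open Real

lemma _root_.EuclideanSpace.norm_le_sqrt_card_mul {ι : Type*} [Fintype ι]
    {y : EuclideanSpace ℝ ι} {r : ℝ} (hr : 0 ≤ r) (h : ∀ i, |y i| ≤ r) :
    ‖y‖ ≤ √(Fintype.card ι) * r := by
  rw [EuclideanSpace.norm_eq, ← Real.sqrt_sq hr, ← Real.sqrt_mul (Nat.cast_nonneg _)]
  refine Real.sqrt_le_sqrt ?_
  calc ∑ i, ‖y i‖ ^ 2 ≤ ∑ _i : ι, r ^ 2 := by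
        gcongr with i
        rw [Real.norm_eq_abs]
        exact h i
    _ = Fintype.card ι * r ^ 2 := by simp

lemma integrableOn_abs_and_setIntegral_abs_le {α : Type*} [MeasurableSpace α] {μ : Measure α}
    {s : Set α} {f g : α → ℝ} (hf : AEStronglyMeasurable f (μ.restrict s))
    (hg : IntegrableOn g s μ) (hfg : ∀ᵐ x ∂μ.restrict s, |f x| ≤ g x) :
    IntegrableOn (fun x => |f x|) s μ ∧ ∫ x in s, |f x| ∂μ ≤ ∫ x in s, g x ∂μ :=
  ⟨hg.mono' hf.norm (by simpa using hfg),
    integral_mono_of_nonneg (.of_forall fun _ => abs_nonneg _) hg hfg⟩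

lemma abs_log_sub_log_le_log_two {x y : ℝ} (hx : 0 ≤ x) (hxy : x ≤ 2 * y) (hyx : y ≤ 2 * x) :
    |log x - log y| ≤ log 2 := by
  rcases hx.eq_or_lt with rfl | hx
  · obtain rfl : y = 0 := by linarith
    simpa using log_nonneg one_le_two
  have hy : 0 < y := by linarith
  rw [abs_sub_le_iff, ← log_div hx.ne' hy.ne', ← log_div hy.ne' hx.ne']
  exact ⟨log_le_log (by positivity) ((div_le_iff₀ hy).2 hxy),
    log_le_log (by positivity) ((div_le_iff₀ hx).2 hyx)⟩

lemma log_two_mul_sqrt_nonneg (d : ℕ) : 0 ≤ log (2 * √d) := by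
  rcases d.eq_zero_or_pos with rfl | hd
  · simp
  · have : 1 ≤ √(d : ℝ) := one_le_sqrt.2 (by exact_mod_cast hd)
    exact log_nonneg (by linarith)

lemma integrable_and_integral_max_log_sub_log_abs_sub (a : ℝ) {l : ℝ} (hl : 0 < l) :
    Integrable (fun t => max (log l - log |t - a|) 0) ∧
      ∫ t, max (log l - log |t - a|) 0 = 2 * l := by
  -- only almost everywhere: at `u = 0` the left side is `max (log l) 0`, as `log 0 = 0`
  have hg : (fun u : ℝ => max (log l - log |u|) 0) =ᵐ[volume]
      (Icc (-l) l).indicator fun u => log l - log u := by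
    filter_upwards [Measure.ae_ne volume 0] with u hu
    by_cases hul : |u| ≤ l
    · have : log |u| ≤ log l := log_le_log (abs_pos.2 hu) hul
      rw [max_eq_left (by linarith), indicator_of_mem (mem_Icc.2 (abs_le.1 hul)), log_abs]
    · have : log l < log |u| := log_lt_log hl (not_le.1 hul)
      rw [max_eq_right (by linarith), indicator_of_notMem fun h => hul (abs_le.2 (mem_Icc.1 h))]
  have hgi : Integrable ((Icc (-l) l).indicator fun u => log l - log u) :=
    (integrable_indicator_iff measurableSet_Icc).2 <|
      (intervalIntegrable_iff_integrableOn_Icc_of_le (by linarith)).1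
        (intervalIntegrable_const.sub intervalIntegral.intervalIntegrable_log')
  have hg_int : ∫ u, (Icc (-l) l).indicator (fun u => log l - log u) u = 2 * l := by
    rw [integral_indicator measurableSet_Icc, integral_Icc_eq_integral_Ioc,
      ← intervalIntegral.integral_of_le (by linarith),
      intervalIntegral.integral_sub intervalIntegrable_const
        intervalIntegral.intervalIntegrable_log',
      integral_log, intervalIntegral.integral_const, log_neg_eq_log]
    simp only [sub_neg_eq_add, smul_eq_mul, neg_mul]
    ring
  refine ⟨((integrable_congr hg).2 hgi).comp_sub_right a, ?_⟩
  rw [integral_sub_right_eq_self (fun t => max (log l - log |t|) 0) a, integral_congr_ae hg, hg_int]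

namespace Cube

def axisInterval (Q : Cube d) (i : Fin d) : Set ℝ :=
  Ioo (Q.c i - Q.len / 2) (Q.c i + Q.len / 2)

lemma set_eq_preimage_pi (Q : Cube d) : Q.set = WithLp.ofLp ⁻¹' univ.pi Q.axisInterval := by
  ext x
  simp only [Cube.set, axisInterval, mem_ofPred_eq, mem_preimage, mem_univ_pi, mem_Ioo,
    abs_sub_lt_iff]
  exact forall_congr' fun i => by constructor <;> rintro ⟨h₁, h₂⟩ <;> constructor <;> linarith

lemma measurableSet_pi_axisInterval (Q : Cube d) : MeasurableSet (univ.pi Q.axisInterval) :=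
  MeasurableSet.univ_pi fun _ => measurableSet_Ioo

lemma measurableSet_set (Q : Cube d) : MeasurableSet Q.set := by
  rw [Q.set_eq_preimage_pi]
  exact Q.measurableSet_pi_axisInterval.preimage (by fun_prop)

lemma vol_pos (Q : Cube d) : 0 < Q.vol := pow_pos Q.len_pos d

lemma volume_set (Q : Cube d) : volume Q.set = ENNReal.ofReal Q.vol := by
  rw [Q.set_eq_preimage_pi, (PiLp.volume_preserving_ofLp (Fin d)).measure_preimage
    Q.measurableSet_pi_axisInterval.nullMeasurableSet,
    show Q.axisInterval = fun i => Ioo _ _ from rfl, Real.volume_pi_Ioo, vol,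
    ENNReal.ofReal_pow Q.len_pos.le]
  simp

lemma volume_set_lt_top (Q : Cube d) : volume Q.set < ⊤ := by
  simp [Q.volume_set]

lemma measureReal_set (Q : Cube d) : volume.real Q.set = Q.vol := by
  rw [measureReal_def, Q.volume_set, ENNReal.toReal_ofReal Q.vol_pos.le]

lemma map_apply_restrict_set (Q : Cube d) (i : Fin d) :
    (volume.restrict Q.set).map (fun x : Rd d => x i) =
      ENNReal.ofReal (Q.len ^ (d - 1)) • volume.restrict (Q.axisInterval i) := by
  classical
  rw [Q.set_eq_preimage_pi, show (fun x : Rd d => x i) = Function.eval i ∘ WithLp.ofLp from rfl,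
    ← Measure.map_map (measurable_pi_apply i) (by fun_prop),
    ((PiLp.volume_preserving_ofLp (Fin d)).restrict_preimage
      Q.measurableSet_pi_axisInterval).map_eq, volume_pi, Measure.restrict_pi_pi,
    Measure.pi_map_eval]
  simp [axisInterval, Finset.prod_const, ENNReal.ofReal_pow Q.len_pos.le]

lemma norm_sub_c_le (Q : Cube d) {x : Rd d} (hx : x ∈ Q.set) :
    ‖x - Q.c‖ ≤ √d * (Q.len / 2) := by
  simpa using EuclideanSpace.norm_le_sqrt_card_mul (half_pos Q.len_pos).le fun i =>
    (by simpa using (hx i).le : |(x - Q.c) i| ≤ Q.len / 2)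

lemma integrableOn_set_comp_apply (Q : Cube d) (i : Fin d) {g : ℝ → ℝ} (hg : Measurable g)
    (hgi : IntegrableOn g (Q.axisInterval i)) :
    IntegrableOn (fun x : Rd d => g (x i)) Q.set := by
  refine (integrable_map_measure hg.aestronglyMeasurable (by fun_prop)).1 ?_
  rw [Q.map_apply_restrict_set]
  exact hgi.smul_measure ENNReal.ofReal_ne_top

lemma setIntegral_set_comp_apply (Q : Cube d) (i : Fin d) {g : ℝ → ℝ} (hg : Measurable g) :
    ∫ x in Q.set, g (x i) = Q.len ^ (d - 1) * ∫ t in Q.axisInterval i, g t := by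
  rw [← integral_map (by fun_prop) hg.aestronglyMeasurable, Q.map_apply_restrict_set,
    integral_smul_measure, ENNReal.toReal_ofReal (pow_nonneg Q.len_pos.le _), smul_eq_mul]

lemma abs_log_norm_sub_sub_log_norm_le (Q : Cube d) {p : Rd d} (hfar : √d * Q.len ≤ ‖Q.c - p‖)
    {x : Rd d} (hx : x ∈ Q.set) : |log ‖x - p‖ - log ‖Q.c - p‖| ≤ log 2 := by
  have hxc : ‖x - Q.c‖ ≤ ‖Q.c - p‖ / 2 := by linarith [Q.norm_sub_c_le hx]
  refine abs_log_sub_log_le_log_two (norm_nonneg _) ?_ ?_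
  · linarith [norm_sub_le_norm_sub_add_norm_sub x Q.c p, norm_nonneg (Q.c - p)]
  · linarith [norm_sub_le_norm_sub_add_norm_sub Q.c x p, norm_sub_rev Q.c x]

lemma abs_log_norm_sub_sub_log_len_le (Q : Cube d) {p : Rd d} (hnear : ‖Q.c - p‖ < √d * Q.len)
    {x : Rd d} (hx : x ∈ Q.set) (i : Fin d) (hxi : x i ≠ p i) :
    |log ‖x - p‖ - log Q.len| ≤ log (2 * √d) + max (log Q.len - log |x i - p i|) 0 := by
  have hxi_pos : 0 < |x i - p i| := abs_pos.2 (sub_ne_zero.2 hxi)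
  have hxi_le : |x i - p i| ≤ ‖x - p‖ := by
    simpa using PiLp.norm_apply_le (x - p) i
  have hxp : ‖x - p‖ ≤ 2 * √d * Q.len := by
    linarith [norm_sub_le_norm_sub_add_norm_sub x Q.c p, Q.norm_sub_c_le hx, Q.len_pos]
  have hupper : log ‖x - p‖ - log Q.len ≤ log (2 * √d) := by
    rw [← log_div (hxi_pos.trans_le hxi_le).ne' Q.len_pos.ne']
    exact log_le_log (div_pos (hxi_pos.trans_le hxi_le) Q.len_pos)
      ((div_le_iff₀ Q.len_pos).2 hxp)
  have hlower : log Q.len - log ‖x - p‖ ≤ max (log Q.len - log |x i - p i|) 0 :=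
    le_max_of_le_left (by linarith [log_le_log hxi_pos hxi_le])
  rw [abs_sub_le_iff]
  constructor <;> linarith [log_two_mul_sqrt_nonneg d, le_max_right (log Q.len - log |x i - p i|) 0]

lemma setIntegral_abs_log_norm_sub_sub_log_norm_le (Q : Cube d) (p : Rd d)
    (hfar : √d * Q.len ≤ ‖Q.c - p‖) :
    IntegrableOn (fun x => |log ‖x - p‖ - log ‖Q.c - p‖|) Q.set ∧
      ∫ x in Q.set, |log ‖x - p‖ - log ‖Q.c - p‖| ≤ log 2 * Q.vol := by
  have h := integrableOn_abs_and_setIntegral_abs_le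
    (Measurable.aestronglyMeasurable (by fun_prop))
    (integrableOn_const Q.volume_set_lt_top.ne)
    ((ae_restrict_iff' Q.measurableSet_set).2 (.of_forall fun x hx =>
      Q.abs_log_norm_sub_sub_log_norm_le hfar hx))
  rwa [setIntegral_const, Q.measureReal_set, smul_eq_mul, mul_comm] at h

lemma setIntegral_abs_log_norm_sub_sub_log_len_le (Q : Cube d) (p : Rd d)
    (hnear : ‖Q.c - p‖ < √d * Q.len) :
    IntegrableOn (fun x => |log ‖x - p‖ - log Q.len|) Q.set ∧
      ∫ x in Q.set, |log ‖x - p‖ - log Q.len| ≤ (log (2 * √d) + 2) * Q.vol := by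
  have hd : 0 < d := by
    have := pos_of_mul_pos_left ((norm_nonneg _).trans_lt hnear) Q.len_pos.le
    exact_mod_cast sqrt_pos.1 this
  set i : Fin d := ⟨0, hd⟩
  set h : ℝ → ℝ := fun t => max (log Q.len - log |t - p i|) 0
  have hh_meas : Measurable h := by fun_prop
  obtain ⟨hh_int, hh_eq⟩ := integrable_and_integral_max_log_sub_log_abs_sub (p i) Q.len_pos
  have hconst : IntegrableOn (fun _ => log (2 * √d)) Q.set :=
    integrableOn_const Q.volume_set_lt_top.ne
  have hslab : IntegrableOn (fun x : Rd d => h (x i)) Q.set :=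
    Q.integrableOn_set_comp_apply i hh_meas hh_int.integrableOn
  have hne : ∀ᵐ x ∂volume.restrict Q.set, x i ≠ p i := by
    refine ae_of_ae_map (p := fun t => t ≠ p i) (by fun_prop) ?_
    rw [Q.map_apply_restrict_set]
    exact Measure.ae_smul_measure (ae_restrict_of_ae (Measure.ae_ne volume (p i))) _
  obtain ⟨hint, hle⟩ := integrableOn_abs_and_setIntegral_abs_le
    (f := fun x => log ‖x - p‖ - log Q.len) (g := fun x => log (2 * √d) + h (x i))
    (Measurable.aestronglyMeasurable (by fun_prop))
    (hconst.add hslab) <| by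
      filter_upwards [ae_restrict_mem Q.measurableSet_set, hne] with x hx hxi
      exact Q.abs_log_norm_sub_sub_log_len_le hnear hx i hxi
  refine ⟨hint, hle.trans ?_⟩
  have hslab_le : ∫ t in Q.axisInterval i, h t ≤ 2 * Q.len :=
    hh_eq ▸ setIntegral_le_integral hh_int (.of_forall fun _ => le_max_right _ _)
  rw [integral_add hconst hslab, setIntegral_const, Q.measureReal_set, smul_eq_mul,
    Q.setIntegral_set_comp_apply i hh_meas]
  have hvol : Q.len ^ (d - 1) * Q.len = Q.vol := pow_sub_one_mul hd.ne' Q.len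
  nlinarith [pow_nonneg Q.len_pos.le (d - 1)]

lemma exists_setIntegral_abs_log_norm_sub_sub_le (Q : Cube d) (p : Rd d) :
    ∃ b, IntegrableOn (fun x => |log ‖x - p‖ - b|) Q.set ∧
      ∫ x in Q.set, |log ‖x - p‖ - b| ≤ (log (2 * √d) + 2) * Q.vol := by
  rcases le_or_gt (√d * Q.len) ‖Q.c - p‖ with hfar | hnear
  · obtain ⟨hint, hle⟩ := Q.setIntegral_abs_log_norm_sub_sub_log_norm_le p hfar
    refine ⟨_, hint, hle.trans (mul_le_mul_of_nonneg_right ?_ Q.vol_pos.le)⟩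
    linarith [log_two_mul_sqrt_nonneg d, log_two_lt_d9]
  · exact ⟨_, Q.setIntegral_abs_log_norm_sub_sub_log_len_le p hnear⟩

end Cube

lemma osc_le_of_setIntegral_le {Q : Cube d} {f : Rd d → ℝ} {b C : ℝ}
    (h : ∫ x in Q.set, |f x - b| ≤ C * Q.vol) : osc Q f ≤ C := by
  refine (ciInf_le ⟨0, ?_⟩ b).trans ?_
  · rintro _ ⟨b', rfl⟩
    exact mul_nonneg (inv_nonneg.2 Q.vol_pos.le) (integral_nonneg fun _ => abs_nonneg _)
  · rwa [inv_mul_le_iff₀ Q.vol_pos, mul_comm]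

lemma osc_logss_le (s : Rd d) (Q : Cube d) : osc Q (logss s) ≤ 2 * (log (2 * √d) + 2) := by
  obtain ⟨b₁, hint₁, hle₁⟩ := Q.exists_setIntegral_abs_log_norm_sub_sub_le s
  obtain ⟨b₂, hint₂, hle₂⟩ := Q.exists_setIntegral_abs_log_norm_sub_sub_le (-s)
  refine osc_le_of_setIntegral_le (b := b₁ - b₂) ?_
  calc ∫ x in Q.set, |logss s x - (b₁ - b₂)|
      ≤ ∫ x in Q.set, (|log ‖x - s‖ - b₁| + |log ‖x - -s‖ - b₂|) := by
        refine integral_mono_of_nonneg (.of_forall fun _ => abs_nonneg _) (hint₁.add hint₂)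
          (.of_forall fun x => ?_)
        simpa [logss, sub_sub_sub_comm] using
          abs_sub (log ‖x - s‖ - b₁) (log ‖x - -s‖ - b₂)
    _ ≤ 2 * (log (2 * √d) + 2) * Q.vol := by
        rw [integral_add hint₁ hint₂]
        linarith

lemma logss_neg (s x : Rd d) : logss s (-x) = -logss s x := by
  rw [logss, logss, ← neg_add', neg_add_eq_sub, norm_neg, norm_sub_rev]
  ring

lemma setIntegral_logss_Q0 (s : Rd d) : ∫ x in (Q0 d).set, logss s x = 0 := by
  have hsymm : ∀ x : Rd d, -x ∈ (Q0 d).set ↔ x ∈ (Q0 d).set := fun x => by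
    simp [Cube.set, Q0, abs_neg]
  have hodd : ∀ x : Rd d, (Q0 d).set.indicator (logss s) (-x) =
      -(Q0 d).set.indicator (logss s) x := fun x => by
    by_cases hx : x ∈ (Q0 d).set
    · rw [indicator_of_mem ((hsymm x).2 hx), indicator_of_mem hx, logss_neg]
    · rw [indicator_of_notMem (mt (hsymm x).1 hx), indicator_of_notMem hx, neg_zero]
  have h := integral_neg_eq_self ((Q0 d).set.indicator (logss s)) volume
  simp only [hodd, integral_neg, integral_indicator (Q0 d).measurableSet_set] at h
  linarith

instance : Nonempty (Cube d) := ⟨Q0 d⟩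

theorem statement_11_general {d : ℕ} :
    ∃ C : ℝ, ∀ s : Rd d,
      BddAbove (Set.range fun Q : Cube d => osc Q (logss s)) ∧
      bmoNorm (logss s) ≤ C := by
  refine ⟨2 * (log (2 * √d) + 2), fun s => ⟨⟨_, forall_mem_range.2 (osc_logss_le s)⟩, ?_⟩⟩
  rw [bmoNorm, avg, setIntegral_logss_Q0, mul_zero, abs_zero, add_zero]
  exact ciSup_le (osc_logss_le s)

/-- The norms `‖log_{s,-s}‖*_BMO` are bounded uniformly in `s ∈ ℝ^d`. -/
theorem statement_11 {d : ℕ} (hd : 0 < d) :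
    ∃ C : ℝ, ∀ s : Rd d,
      BddAbove (Set.range fun Q : Cube d => osc Q (logss s)) ∧
      bmoNorm (logss s) ≤ C :=
  statement_11_general

end TL
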